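/- Let A be a real symmetric positive definite d×d matrix, G an M×d real matrix, and μ, g, b ∈ ℝ^M. Define the M×M matrix Sc = diag(g − b) − diag(μ) · G A⁻¹ Gᵀ. Suppose there is a subset 𝒜 ⊆ {1, …, M} with |𝒜| ≤ d such that: (i) for every m ∉ 𝒜, μ_m = 0 and g_m ≠ b_m; (ii) for every m ∈ 𝒜, μ_m > 0 and g_m = b_m; and (iii) the rows of G indexed by 𝒜 are linearly independent. Then Sc is invertible. -/

import Mathlib

/-!
Let `K = G A⁻¹ Gᵀ` and suppose `(diag(g - b) - diag(μ) K) v = 0`. Off `𝒜` the row reads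
`(g m - b m) v m = 0`, so `v m = 0`; on `𝒜` it reads `μ m (K v) m = 0`, so `(K v) m = 0`.
Hence `vᵀ K v = (Gᵀ v)ᵀ A⁻¹ (Gᵀ v) = 0`, and positive definiteness of `A⁻¹` gives `Gᵀ v = 0`:
a linear relation among the rows of `G` indexed by `𝒜`, which are independent, so `v = 0`.
-/

open Matrix

namespace Matrix

variable {ι n R : Type*} [Fintype ι]

theorem PosDef.conjTranspose_mulVec_eq_zero_of_dotProduct_mulVec_eq_zero
    [Fintype n] [CommRing R] [PartialOrder R] [StarRing R] {B : Matrix n n R} (hB : B.PosDef)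
    (G : Matrix ι n R) {v : ι → R} (h : star v ⬝ᵥ (G * B * Gᴴ) *ᵥ v = 0) : Gᴴ *ᵥ v = 0 := by
  by_contra hw
  have hpos := hB.dotProduct_mulVec_pos hw
  rw [star_mulVec, conjTranspose_conjTranspose, ← dotProduct_mulVec, mulVec_mulVec,
    mulVec_mulVec] at hpos
  exact hpos.ne' h

theorem eq_zero_of_vecMul_eq_zero_of_linearIndependent [Ring R] {G : Matrix ι n R}
    {s : Finset ι} (hG : LinearIndependent R fun i : s => G i) {v : ι → R}
    (hv : ∀ i ∉ s, v i = 0) (h : v ᵥ* G = 0) : v = 0 := by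
  have hsum : ∑ i : s, v i • G i = 0 := by
    rw [Finset.sum_coe_sort s (fun i => v i • G i), Finset.sum_subset s.subset_univ
      (fun i _ hi => by rw [hv i hi, zero_smul]), ← vecMul_eq_sum, h]
  funext i
  by_cases hi : i ∈ s
  · exact Fintype.linearIndependent_iff.mp hG (fun j => v j) hsum ⟨i, hi⟩
  · exact hv i hi

theorem diagonal_sub_diagonal_mul_mulVec_eq_zero_iff [DecidableEq ι] [Ring R]
    (c μ : ι → R) (K : Matrix ι ι R) (v : ι → R) :
    (diagonal c - diagonal μ * K) *ᵥ v = 0 ↔ ∀ i, c i * v i = μ i * (K *ᵥ v) i := by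
  simp only [funext_iff, sub_mulVec, ← mulVec_mulVec, mulVec_diagonal, sub_eq_zero]

end Matrix

theorem schur_complement_invertible_general {d M : ℕ}
    (A : Matrix (Fin d) (Fin d) ℝ) (hA : A.PosDef)
    (G : Matrix (Fin M) (Fin d) ℝ) (μ g b : Fin M → ℝ)
    (𝒜 : Finset (Fin M))
    (hout : ∀ m ∉ 𝒜, μ m = 0 ∧ g m ≠ b m)
    (hin : ∀ m ∈ 𝒜, 0 < μ m ∧ g m = b m)
    (hli : LinearIndependent ℝ (fun m : 𝒜 => G m)) :
    IsUnit (Matrix.diagonal (g - b) - Matrix.diagonal μ * (G * A⁻¹ * Gᵀ)) := by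
  rw [isUnit_iff_isUnit_det, isUnit_iff_ne_zero, Ne, ← exists_mulVec_eq_zero_iff]
  rintro ⟨v, hv0, hv⟩
  have hrow := (diagonal_sub_diagonal_mul_mulVec_eq_zero_iff _ _ _ v).mp hv
  have hv_out : ∀ m ∉ 𝒜, v m = 0 := fun m hm => by
    have := hrow m
    rw [(hout m hm).1, zero_mul, mul_eq_zero, Pi.sub_apply, sub_eq_zero] at this
    exact this.resolve_left (hout m hm).2
  have hKv_in : ∀ m ∈ 𝒜, ((G * A⁻¹ * Gᵀ) *ᵥ v) m = 0 := fun m hm => by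
    have := hrow m
    rw [Pi.sub_apply, (hin m hm).2, sub_self, zero_mul, eq_comm, mul_eq_zero] at this
    exact this.resolve_left (hin m hm).1.ne'
  have hquad : star v ⬝ᵥ (G * A⁻¹ * Gᴴ) *ᵥ v = 0 := by
    rw [star_trivial, conjTranspose_eq_transpose_of_trivial]
    refine Finset.sum_eq_zero fun m _ => ?_
    by_cases hm : m ∈ 𝒜
    · rw [hKv_in m hm, mul_zero]
    · rw [hv_out m hm, zero_mul]
  have hvG : v ᵥ* G = 0 := by
    rw [← mulVec_transpose, ← conjTranspose_eq_transpose_of_trivial]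
    exact hA.inv.conjTranspose_mulVec_eq_zero_of_dotProduct_mulVec_eq_zero G hquad
  exact hv0 (eq_zero_of_vecMul_eq_zero_of_linearIndependent hli hv_out hvG)

/-- Proposition 2 (Sufficient Conditions of Accurate Differentiation): under the stated
conditions on the activated constraint set `𝒜`, the Schur complement
`Sc = diag(g − b) − diag(μ) G A⁻¹ Gᵀ` is invertible. -/
theorem schur_complement_invertible {d M : ℕ}
    (A : Matrix (Fin d) (Fin d) ℝ) (hA : A.PosDef)
    (G : Matrix (Fin M) (Fin d) ℝ) (μ g b : Fin M → ℝ)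
    (𝒜 : Finset (Fin M)) (hcard : 𝒜.card ≤ d)
    (hout : ∀ m ∉ 𝒜, μ m = 0 ∧ g m ≠ b m)
    (hin : ∀ m ∈ 𝒜, 0 < μ m ∧ g m = b m)
    (hli : LinearIndependent ℝ (fun m : 𝒜 => G m)) :
    IsUnit (Matrix.diagonal (g - b) - Matrix.diagonal μ * (G * A⁻¹ * Gᵀ)) :=
  schur_complement_invertible_general A hA G μ g b 𝒜 hout hin hli
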